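/- Every alternative real division algebra is isomorphic to the reals, the complex numbers, the quaternions, or the octonions. -/

import Mathlib

/-- The octonions, constructed from the quaternions via the Cayley–Dickson
construction. -/
def Octo : Type := Quaternion ℝ × Quaternion ℝ

noncomputable instance : AddCommGroup Octo :=
  inferInstanceAs (AddCommGroup (Quaternion ℝ × Quaternion ℝ))

noncomputable instance : Module ℝ Octo :=
  inferInstanceAs (Module ℝ (Quaternion ℝ × Quaternion ℝ))

/-- Cayley–Dickson multiplication on pairs of quaternions. -/
noncomputable instance : Mul Octo :=
  ⟨fun x y => show Quaternion ℝ × Quaternion ℝ from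
    (Prod.fst x * Prod.fst y - star (Prod.snd y) * Prod.snd x,
     Prod.snd y * Prod.fst x + Prod.snd x * star (Prod.fst y))⟩

/-!
A finite-dimensional alternative division algebra `A` has a two-sided unit `e` (a left
multiplication is bijective), and every `x ∈ A` is a root of a real quadratic: left
multiplication by `x` has an invariant subspace of dimension at most two, and left
alternativity turns the quadratic relation for the operator into one for `x`. By Frobenius'
lemma the imaginary elements (those whose square lies in `ℝ≤0 • e`) form a complement of
`ℝ e`, which gives a linear trace `t` and a positive definite norm `n` with
`x² = t x • x - n x • e`. The identity `(xy)(yx) = (x y²) x` of alternative algebras makes `n`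
multiplicative, so the polar form of `n` satisfies the adjunction identities of a composition
algebra.

Cayley–Dickson doubling then runs inside `A`. If `B` is a unital subalgebra and `l` a unit
vector orthogonal to `B`, then `(a + b l)(c + d l) = (a c - d̄ b) + (d a + b c̄) l` for
`a, b, c, d ∈ B`, and `B` is associative. Starting from `ℝ e`, a unit vector orthogonal to
the current subalgebra exists as long as it is proper, and we obtain copies of `ℂ`, `ℍ` and
`𝕆` in turn. As `𝕆` is not associative, nothing is orthogonal to it, so it is all of `A`.
-/

open Polynomial

theorem Module.End.exists_apply_apply_add_smul_add_smul_eq_zero {V : Type*} [AddCommGroup V]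
    [Module ℝ V] [FiniteDimensional ℝ V] [Nontrivial V] (f : Module.End ℝ V) :
    ∃ (a b : ℝ) (w : V), w ≠ 0 ∧ f (f w) + a • f w + b • w = 0 := by
  have hint : IsIntegral ℝ f := Algebra.IsIntegral.isIntegral f
  obtain ⟨n, hn⟩ : ∃ n, (minpoly ℝ f).natDegree = n + 1 :=
    Nat.exists_eq_succ_of_ne_zero (minpoly.natDegree_pos hint).ne'
  obtain ⟨g, h, hg, hgh⟩ :=
    (IsMonicOfDegree.mk hn (minpoly.monic hint)).eq_isMonicOfDegree_one_or_two_mul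
  have hh0 : h ≠ 0 := right_ne_zero_of_mul (hgh ▸ minpoly.ne_zero hint)
  have hhf : aeval f h ≠ 0 := fun h0 => by
    have hle := natDegree_le_natDegree (minpoly.degree_le_of_ne_zero ℝ f hh0 h0)
    have hg0 : g ≠ 0 ∧ g.natDegree ≠ 0 := by
      rcases hg with hg | hg <;> exact ⟨hg.ne_zero, by simp [hg.natDegree_eq]⟩
    rw [hgh, natDegree_mul hg0.1 hh0] at hle
    omega
  obtain ⟨v, hv⟩ : ∃ v, aeval f h v ≠ 0 := not_forall.mp fun H => hhf (LinearMap.ext H)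
  have hgw : aeval f g (aeval f h v) = 0 := by
    rw [← Module.End.mul_apply, ← map_mul, ← hgh, minpoly.aeval, LinearMap.zero_apply]
  obtain ⟨q, hq, hqw⟩ :
      ∃ q : ℝ[X], IsMonicOfDegree q 2 ∧ aeval f q (aeval f h v) = 0 := by
    rcases hg with hg1 | hg2
    · refine ⟨X * g, (isMonicOfDegree_X ℝ).mul hg1, ?_⟩
      rw [map_mul, Module.End.mul_apply, hgw, map_zero]
    · exact ⟨g, hg2, hgw⟩
  obtain ⟨a, b, rfl⟩ := isMonicOfDegree_two_iff.mp hq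
  refine ⟨a, b, _, hv, ?_⟩
  simpa [pow_two, Module.algebraMap_end_apply] using hqw

theorem exists_linearEquiv_map_mul_of_range_eq_top {R T M : Type*} [Semiring R]
    [AddCommMonoid T] [Module R T] [Mul T] [AddCommMonoid M] [Module R M] [Mul M]
    (φ : T →ₗ[R] M) (hinj : Function.Injective φ) (htop : LinearMap.range φ = ⊤)
    (hmul : ∀ x y, φ (x * y) = φ x * φ y) :
    ∃ e : M ≃ₗ[R] T, ∀ x y, e (x * y) = e x * e y := by
  let E := LinearEquiv.ofBijective φ ⟨hinj, LinearMap.range_eq_top.mp htop⟩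
  refine ⟨E.symm, fun x y => E.injective ?_⟩
  rw [E.apply_symm_apply]
  exact (congrArg₂ (· * ·) (E.apply_symm_apply x) (E.apply_symm_apply y)).symm.trans
    (hmul _ _).symm

theorem LinearMap.injective_of_map_mul {R K M : Type*} [Semiring R] [DivisionRing K] [Module R K]
    [NonUnitalNonAssocSemiring M] [Module R M] (φ : K →ₗ[R] M)
    (hmul : ∀ x y, φ (x * y) = φ x * φ y) (h1 : φ 1 ≠ 0) : Function.Injective φ :=
  (injective_iff_map_eq_zero φ).2 fun z hz => by_contra fun hz0 =>
    h1 (by rw [← mul_inv_cancel₀ hz0, hmul, hz, zero_mul])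

theorem LinearMap.mul_mem_range_of_map_mul {R T M : Type*} [Semiring R] [AddCommMonoid T]
    [Module R T] [Mul T] [AddCommMonoid M] [Module R M] [Mul M] (φ : T →ₗ[R] M)
    (hmul : ∀ x y, φ (x * y) = φ x * φ y) :
    ∀ a ∈ range φ, ∀ b ∈ range φ, a * b ∈ range φ := by
  rintro _ ⟨x, rfl⟩ _ ⟨y, rfl⟩
  exact ⟨x * y, hmul x y⟩

section AlternativeRing

variable {R : Type*} [NonUnitalNonAssocRing R]
  (halt : ∀ x y : R, x * (x * y) = x * x * y ∧ x * (y * y) = x * y * y)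
include halt

theorem associator_self_left (x y : R) : associator x x y = 0 := by
  rw [associator_apply, (halt x y).1, sub_self]

theorem associator_self_right (x y : R) : associator x y y = 0 := by
  rw [associator_apply, (halt x y).2, sub_self]

theorem associator_swap_left (x y z : R) : associator y x z = -associator x y z := by
  have h := associator_self_left halt (x + y) z
  simp only [associator_apply, add_mul, mul_add] at h ⊢
  rw [(halt x z).1, (halt y z).1] at h
  rw [eq_neg_iff_add_eq_zero]
  linear_combination (norm := abel) h

theorem associator_swap_right (x y z : R) : associator x z y = -associator x y z := by
  have h := associator_self_right halt x (y + z)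
  simp only [associator_apply, add_mul, mul_add] at h ⊢
  rw [(halt x y).2, (halt x z).2] at h
  rw [eq_neg_iff_add_eq_zero]
  linear_combination (norm := abel) h

theorem associator_self_mid (x y : R) : associator x y x = 0 := by
  rw [associator_swap_right halt, associator_self_left halt, neg_zero]

end AlternativeRing

section DivisionAlgebra

variable {A : Type*} [NonUnitalNonAssocRing A] [Module ℝ A]

def IsImaginary (e v : A) : Prop := ∃ c : ℝ, c ≤ 0 ∧ v * v = c • e

theorem isImaginary_zero {e : A} : IsImaginary e (0 : A) := ⟨0, le_rfl, by simp⟩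

variable [SMulCommClass ℝ A A] [IsScalarTower ℝ A A]
  (hdiv : ∀ x y : A, x * y = 0 → x = 0 ∨ y = 0)
  (halt : ∀ x y : A, x * (x * y) = x * x * y ∧ x * (y * y) = x * y * y)

omit [IsScalarTower ℝ A A] in
include hdiv halt in
theorem exists_unit [FiniteDimensional ℝ A] [Nontrivial A] :
    ∃ e : A, e ≠ 0 ∧ (∀ x : A, e * x = x) ∧ (∀ x : A, x * e = x) := by
  obtain ⟨a, ha⟩ := exists_ne (0 : A)
  have hinj {x : A} (hx : x ≠ 0) : Function.Injective (LinearMap.mulLeft ℝ x) :=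
    fun y z h => sub_eq_zero.mp <|
      (hdiv x _ (by simpa [mul_sub, sub_eq_zero] using h)).resolve_left hx
  obtain ⟨e, he⟩ := LinearMap.injective_iff_surjective.mp (hinj ha) a
  simp only [LinearMap.mulLeft_apply] at he
  have he0 : e ≠ 0 := by rintro rfl; exact ha (by simpa using he.symm)
  have hee : e * e = e := hinj ha (by simp [(halt a e).2, he])
  refine ⟨e, he0, fun x => hinj he0 ?_, fun x => ?_⟩
  · simp [(halt e x).1, hee]
  · have h : (x * e - x) * e = 0 := by rw [sub_mul, ← (halt x e).2, hee, sub_self]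
    exact sub_eq_zero.mp ((hdiv _ _ h).resolve_right he0)

variable {e : A} (he0 : e ≠ 0) (he1 : ∀ x : A, e * x = x) (he2 : ∀ x : A, x * e = x)

theorem IsImaginary.smul {v : A} (hv : IsImaginary e v) (d : ℝ) : IsImaginary e (d • v) := by
  obtain ⟨c, hc, hvv⟩ := hv
  refine ⟨d ^ 2 * c, by nlinarith [sq_nonneg d], ?_⟩
  rw [smul_mul_assoc, mul_smul_comm, hvv, smul_smul, smul_smul, sq]

include he0 he2 in
theorem IsImaginary.eq_zero_of_eq_smul {v : A} (hv : IsImaginary e v) {d : ℝ} (h : v = d • e) :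
    d = 0 := by
  obtain ⟨c, hc, hvv⟩ := hv
  rw [h, smul_mul_assoc, mul_smul_comm, he2, smul_smul] at hvv
  have hdc : d * d = c := smul_left_injective ℝ he0 hvv
  nlinarith

include he0 he2 in
theorem IsImaginary.smul_ne_smul {u : A} (hu : IsImaginary e u) (hu0 : u ≠ 0) {c : ℝ}
    (hc : c ≠ 0) (d : ℝ) : c • u ≠ d • e := fun h => by
  have hue : u = (c⁻¹ * d) • e := by rw [← inv_smul_smul₀ hc u, h, smul_smul]
  rw [hue, hu.eq_zero_of_eq_smul he0 he2 hue, zero_smul] at hu0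
  exact hu0 rfl

include hdiv he1 he2 in
theorem exists_eq_smul_of_mul_self_eq {x : A} {c : ℝ} (h : x * x = c • e) (hc : 0 ≤ c) :
    ∃ r : ℝ, x = r • e := by
  have hz : (x - √c • e) * (x + √c • e) = x * x - (√c * √c) • e := by
    simp only [mul_add, sub_mul, smul_mul_assoc, mul_smul_comm, he1, he2]
    module
  rw [h, Real.mul_self_sqrt hc, sub_self] at hz
  rcases hdiv _ _ hz with h | h
  · exact ⟨√c, sub_eq_zero.mp h⟩
  · exact ⟨-√c, by rw [neg_smul]; exact eq_neg_of_add_eq_zero_left h⟩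

include he0 he1 he2 in
theorem IsImaginary.independent {u v : A} (hu : IsImaginary e u) (hv : IsImaginary e v)
    (hu0 : u ≠ 0) (huv : ∀ d : ℝ, v ≠ d • u) {r s t : ℝ}
    (h : r • e + s • u + t • v = 0) : r = 0 ∧ s = 0 ∧ t = 0 := by
  obtain ⟨a, -, hau⟩ := id hu
  obtain ⟨b, -, hbv⟩ := id hv
  have htv : t • v = (-r) • e + (-s) • u := by linear_combination (norm := module) h
  obtain rfl : t = 0 := by
    by_contra ht
    have hsq : (2 * r * s) • u = (t ^ 2 * b - r ^ 2 - s ^ 2 * a) • e := by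
      have hsq := congrArg (fun w => w * w) htv
      simp only [smul_mul_assoc, mul_smul_comm, add_mul, mul_add, he1, he2, hau,
        hbv, smul_smul] at hsq
      linear_combination (norm := module) -hsq
    rcases eq_or_ne (2 * r * s) 0 with hrs | hrs
    · rcases mul_eq_zero.mp hrs with hr | rfl
      · obtain rfl : r = 0 := by simpa using hr
        apply huv (t⁻¹ * -s)
        rw [← smul_smul, ← inv_smul_smul₀ ht v, htv, neg_zero, zero_smul, zero_add]
      · have hve : v = (t⁻¹ * -r) • e := by
          rw [← smul_smul, ← inv_smul_smul₀ ht v, htv, neg_zero, zero_smul, add_zero]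
        apply huv 0
        rw [hve, hv.eq_zero_of_eq_smul he0 he2 hve, zero_smul, zero_smul]
    · exact hu.smul_ne_smul he0 he2 hu0 hrs _ hsq
  obtain rfl : s = 0 := by
    by_contra hs
    exact hu.smul_ne_smul he0 he2 hu0 hs (-r) (by linear_combination (norm := module) h)
  simpa [he0] using h

include hdiv halt he1 in
theorem exists_mul_self_eq [FiniteDimensional ℝ A] [Nontrivial A] (x : A) :
    ∃ a b : ℝ, x * x = a • x + b • e := by
  obtain ⟨a, b, w, hw, h⟩ :=
    Module.End.exists_apply_apply_add_smul_add_smul_eq_zero (LinearMap.mulLeft ℝ x)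
  have hxw : (x * x + a • x + b • e) * w = 0 := by
    simpa only [add_mul, smul_mul_assoc, he1, ← (halt x w).1, LinearMap.mulLeft_apply] using h
  refine ⟨-a, -b, ?_⟩
  linear_combination (norm := module) (hdiv _ _ hxw).resolve_right hw

variable [FiniteDimensional ℝ A] [Nontrivial A]

include hdiv halt he0 he1 he2 in
theorem IsImaginary.add {u v : A} (hu : IsImaginary e u) (hv : IsImaginary e v) :
    IsImaginary e (u + v) := by
  rcases eq_or_ne u 0 with rfl | hu0
  · rwa [zero_add]
  by_cases hpar : ∃ d : ℝ, v = d • u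
  · obtain ⟨d, rfl⟩ := hpar
    simpa [add_smul] using hu.smul (1 + d)
  push Not at hpar
  -- the quadratic relations of `u + v` and `u - v` add up to a linear relation in `e, u, v`
  obtain ⟨a, -, hau⟩ := id hu
  obtain ⟨b, -, hbv⟩ := id hv
  obtain ⟨p₁, q₁, h₁⟩ := exists_mul_self_eq hdiv halt he1 (u + v)
  obtain ⟨p₂, q₂, h₂⟩ := exists_mul_self_eq hdiv halt he1 (u - v)
  have hsum :
      (q₁ + q₂ - 2 * a - 2 * b) • e + (p₁ + p₂) • u + (p₁ - p₂) • v = 0 := by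
    have hsq : (u + v) * (u + v) + (u - v) * (u - v) = (2 * a + 2 * b) • e := by
      simp only [mul_add, add_mul, mul_sub, sub_mul, hau, hbv]
      module
    rw [h₁, h₂] at hsq
    linear_combination (norm := module) hsq
  obtain ⟨-, hp, hm⟩ := hu.independent he0 he1 he2 hv hu0 hpar hsum
  rw [show p₁ = 0 by linarith, zero_smul, zero_add] at h₁
  refine ⟨q₁, not_lt.mp fun hq => ?_, h₁⟩
  obtain ⟨r, hr⟩ := exists_eq_smul_of_mul_self_eq hdiv he1 he2 h₁ hq.le
  have h1 := hu.independent he0 he1 he2 hv hu0 hpar (r := -r) (s := 1) (t := 1)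
    (by rw [one_smul, one_smul, add_assoc, hr]; module)
  exact one_ne_zero h1.2.1

include hdiv halt he1 he2 in
theorem exists_smul_add_isImaginary (x : A) :
    ∃ (c : ℝ) (v : A), IsImaginary e v ∧ x = c • e + v := by
  obtain ⟨a, b, hx⟩ := exists_mul_self_eq hdiv halt he1 x
  have hv : (x - (a / 2) • e) * (x - (a / 2) • e) = (b + a ^ 2 / 4) • e := by
    simp only [mul_sub, sub_mul, smul_mul_assoc, mul_smul_comm, he1, he2, hx]
    module
  by_cases hc : b + a ^ 2 / 4 ≤ 0
  · exact ⟨a / 2, _, ⟨_, hc, hv⟩, by abel⟩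
  · obtain ⟨r, hr⟩ := exists_eq_smul_of_mul_self_eq hdiv he1 he2 hv (not_le.mp hc).le
    exact ⟨a / 2 + r, 0, isImaginary_zero, by rw [add_zero, add_smul, ← hr]; abel⟩

include hdiv halt he0 he1 he2 in
theorem IsImaginary.eq_of_smul_add_eq {c c' : ℝ} {v v' : A} (hv : IsImaginary e v)
    (hv' : IsImaginary e v') (h : c • e + v = c' • e + v') : c = c' := by
  have hsub : IsImaginary e (v + (-1 : ℝ) • v') := hv.add hdiv halt he0 he1 he2 (hv'.smul _)
  have := hsub.eq_zero_of_eq_smul he0 he2 (d := c' - c) (by linear_combination (norm := module) h)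
  linarith

end DivisionAlgebra

/-- `t` is the trace and `n` the norm with respect to the unit `e`. -/
structure QuadraticStructure (A : Type*) [NonUnitalNonAssocRing A] [Module ℝ A] where
  e : A
  t : A →ₗ[ℝ] ℝ
  n : A → ℝ
  e_mul (x : A) : e * x = x
  mul_e (x : A) : x * e = x
  t_e : t e = 2
  mul_self (x : A) : x * x = t x • x - n x • e
  n_pos {x : A} : x ≠ 0 → 0 < n x

theorem nonempty_quadraticStructure {A : Type*} [NonUnitalNonAssocRing A] [Module ℝ A]
    [SMulCommClass ℝ A A] [IsScalarTower ℝ A A] [FiniteDimensional ℝ A] [Nontrivial A]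
    (hdiv : ∀ x y : A, x * y = 0 → x = 0 ∨ y = 0)
    (halt : ∀ x y : A, x * (x * y) = x * x * y ∧ x * (y * y) = x * y * y) :
    Nonempty (QuadraticStructure A) := by
  obtain ⟨e, he0, he1, he2⟩ := exists_unit hdiv halt
  choose re im him hdec using exists_smul_add_isImaginary hdiv halt he1 he2
  have hre {x : A} {c : ℝ} {v : A} (hv : IsImaginary e v) (hx : x = c • e + v) : re x = c :=
    (him x).eq_of_smul_add_eq hdiv halt he0 he1 he2 hv ((hdec x).symm.trans hx)
  let reL : A →ₗ[ℝ] ℝ :=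
    { toFun := re
      map_add' x y := hre ((him x).add hdiv halt he0 he1 he2 (him y))
        (by linear_combination (norm := module) hdec x + hdec y)
      map_smul' c x := (hre (c := c * re x) ((him x).smul c)
        (by linear_combination (norm := module) c • hdec x)).trans (by simp) }
  choose c hc0 hc using fun x => him x
  refine ⟨⟨e, 2 • reL, fun x => re x ^ 2 - c x, he1, he2, ?_, fun x => ?_,
    fun {x} hx => ?_⟩⟩
  · simp [reL, hre isImaginary_zero (show e = (1 : ℝ) • e + 0 by simp)]
  · have hsq : x * x = (re x • e + im x) * (re x • e + im x) := by rw [← hdec x]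
    simp only [add_mul, mul_add, smul_mul_assoc, mul_smul_comm, he1, he2, hc] at hsq
    simp only [LinearMap.smul_apply, LinearMap.coe_mk, AddHom.coe_mk, reL]
    linear_combination (norm := module) hsq - (2 * re x) • hdec x
  · by_contra hn
    have hre0 : re x = 0 := by nlinarith [hc0 x]
    have hc0 : c x = 0 := by nlinarith [hc0 x]
    have him0 : im x = 0 := by
      have h := hc x
      rw [hc0, zero_smul] at h
      exact (hdiv _ _ h).elim id id
    exact hx (by rw [hdec x, hre0, him0, zero_smul, add_zero])

namespace QuadraticStructure

variable {A : Type*} [NonUnitalNonAssocRing A] [Module ℝ A] (P : QuadraticStructure A)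

theorem e_ne_zero : P.e ≠ 0 := fun h => by simpa [h] using P.t_e

theorem smul_e_injective : Function.Injective (· • P.e : ℝ → A) :=
  smul_left_injective ℝ P.e_ne_zero

theorem n_zero : P.n 0 = 0 := by
  have h := P.mul_self 0
  simp only [mul_zero, map_zero, zero_smul, zero_sub, zero_eq_neg, smul_eq_zero] at h
  exact h.resolve_right P.e_ne_zero

theorem n_eq_zero_iff {x : A} : P.n x = 0 ↔ x = 0 :=
  ⟨fun h => by_contra fun hx => (P.n_pos hx).ne' h, fun h => h ▸ P.n_zero⟩

theorem n_nonneg (x : A) : 0 ≤ P.n x := by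
  rcases eq_or_ne x 0 with rfl | hx
  · exact P.n_zero.ge
  · exact (P.n_pos hx).le

noncomputable def polar (x y : A) : ℝ := (P.n (x + y) - P.n x - P.n y) / 2

theorem n_add (x y : A) : P.n (x + y) = P.n x + P.n y + 2 * P.polar x y := by
  unfold polar; ring

theorem polar_comm (x y : A) : P.polar x y = P.polar y x := by
  unfold polar; rw [add_comm x y]; ring

theorem mul_add_mul_swap (x y : A) :
    x * y + y * x = P.t x • y + P.t y • x - (2 * P.polar x y) • P.e := by
  have h := P.mul_self (x + y)
  rw [P.n_add, map_add, mul_add, add_mul, add_mul, P.mul_self x, P.mul_self y] at h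
  linear_combination (norm := module) h

theorem two_polar_e (x : A) : 2 * P.polar x P.e = P.t x := by
  have h := P.mul_add_mul_swap x P.e
  rw [P.e_mul, P.mul_e, P.t_e] at h
  exact P.smul_e_injective (by linear_combination (norm := module) h)

theorem polar_add_left (x x' y : A) : P.polar (x + x') y = P.polar x y + P.polar x' y := by
  have h := P.mul_add_mul_swap (x + x') y
  rw [add_mul, mul_add, map_add] at h
  have h' : (2 * P.polar (x + x') y) • P.e = (2 * (P.polar x y + P.polar x' y)) • P.e := by
    linear_combination (norm := module) h - P.mul_add_mul_swap x y - P.mul_add_mul_swap x' y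
  linarith [P.smul_e_injective h']

theorem polar_add_right (x y y' : A) : P.polar x (y + y') = P.polar x y + P.polar x y' := by
  rw [polar_comm, polar_add_left, polar_comm P y, polar_comm P y']

def conj (x : A) : A := P.t x • P.e - x

theorem conj_conj (x : A) : P.conj (P.conj x) = x := by
  simp only [conj, map_sub, map_smul, P.t_e, smul_eq_mul]
  module

theorem add_conj (x : A) : x + P.conj x = P.t x • P.e := by
  rw [conj, add_sub_cancel]

theorem t_eq_zero_of_polar_e {i : A} (h : P.polar i P.e = 0) : P.t i = 0 := by
  rw [← P.two_polar_e, h, mul_zero]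

theorem conj_eq_neg {i : A} (h : P.t i = 0) : P.conj i = -i := by
  rw [conj, h, zero_smul, zero_sub]

theorem mul_self_eq_neg_e {i : A} (ht : P.t i = 0) (hn : P.n i = 1) : i * i = -P.e := by
  rw [P.mul_self, ht, hn, zero_smul, one_smul, zero_sub]

theorem conj_mem {B : Submodule ℝ A} (hBe : P.e ∈ B) {b : A} (hb : b ∈ B) : P.conj b ∈ B :=
  B.sub_mem (B.smul_mem _ hBe) hb

noncomputable def complexEmb (i : A) : ℂ →ₗ[ℝ] A :=
  Complex.reLm.smulRight P.e + Complex.imLm.smulRight i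

theorem complexEmb_apply (i : A) (z : ℂ) : P.complexEmb i z = z.re • P.e + z.im • i := rfl

theorem complexEmb_one (i : A) : P.complexEmb i 1 = P.e := by simp [complexEmb_apply]

theorem complexEmb_I (i : A) : P.complexEmb i Complex.I = i := by simp [complexEmb_apply]

noncomputable def quaternionEmb (i j : A) : Quaternion ℝ →ₗ[ℝ] A :=
  (QuaternionAlgebra.reₗ _ _ _).smulRight P.e + (QuaternionAlgebra.imIₗ _ _ _).smulRight i +
    (QuaternionAlgebra.imJₗ _ _ _).smulRight j +
    (QuaternionAlgebra.imKₗ _ _ _).smulRight (i * j)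

theorem quaternionEmb_apply (i j : A) (q : Quaternion ℝ) :
    P.quaternionEmb i j q = q.re • P.e + q.imI • i + q.imJ • j + q.imK • (i * j) := rfl

theorem mul_anticomm {i j : A} (hti : P.t i = 0) (htj : P.t j = 0) (hij : P.polar i j = 0) :
    j * i = -(i * j) := by
  have h := P.mul_add_mul_swap i j
  rw [hti, htj, hij] at h
  linear_combination (norm := module) h

theorem quaternionEmb_one (i j : A) : P.quaternionEmb i j 1 = P.e := by
  simp [quaternionEmb_apply, Quaternion.re_one, Quaternion.imI_one, Quaternion.imJ_one,
    Quaternion.imK_one]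

theorem left_mem_range_quaternionEmb (i j : A) : i ∈ LinearMap.range (P.quaternionEmb i j) :=
  ⟨show Quaternion ℝ from ⟨0, 1, 0, 0⟩, by rw [quaternionEmb_apply]; simp⟩

theorem right_mem_range_quaternionEmb (i j : A) : j ∈ LinearMap.range (P.quaternionEmb i j) :=
  ⟨show Quaternion ℝ from ⟨0, 0, 1, 0⟩, by rw [quaternionEmb_apply]; simp⟩

variable [SMulCommClass ℝ A A] [IsScalarTower ℝ A A]

theorem n_smul (c : ℝ) (x : A) : P.n (c • x) = c ^ 2 * P.n x := by
  have h := P.mul_self (c • x)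
  rw [smul_mul_assoc, mul_smul_comm, P.mul_self x, map_smul, smul_eq_mul] at h
  exact P.smul_e_injective (by linear_combination (norm := module) h)

theorem polar_self (x : A) : P.polar x x = P.n x := by
  unfold polar
  rw [← two_smul ℝ x, n_smul]
  ring

theorem polar_smul_left (c : ℝ) (x y : A) : P.polar (c • x) y = c * P.polar x y := by
  have h := P.mul_add_mul_swap (c • x) y
  rw [smul_mul_assoc, mul_smul_comm, map_smul, smul_eq_mul] at h
  have h' : (2 * P.polar (c • x) y) • P.e = (2 * (c * P.polar x y)) • P.e := by
    linear_combination (norm := module) h - c • P.mul_add_mul_swap x y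
  linarith [P.smul_e_injective h']

theorem polar_smul_right (c : ℝ) (x y : A) : P.polar x (c • y) = c * P.polar x y := by
  rw [polar_comm, polar_smul_left, polar_comm]

theorem polar_neg_left (x y : A) : P.polar (-x) y = -P.polar x y := by
  rw [← neg_one_smul ℝ x, polar_smul_left, neg_one_mul]

theorem polar_sub_left (x x' y : A) : P.polar (x - x') y = P.polar x y - P.polar x' y := by
  rw [sub_eq_add_neg, polar_add_left, polar_neg_left, sub_eq_add_neg]

theorem polar_sub_right (x y y' : A) : P.polar x (y - y') = P.polar x y - P.polar x y' := by
  rw [polar_comm, polar_sub_left, polar_comm P y, polar_comm P y']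

theorem eq_of_polar_eq {u w : A} (h : ∀ z, P.polar u z = P.polar w z) : u = w := by
  have h0 : P.polar (u - w) (u - w) = 0 := by
    rw [polar_sub_left, polar_sub_right, polar_sub_right, h u, h w]
    ring
  rw [polar_self, n_eq_zero_iff, sub_eq_zero] at h0
  exact h0

theorem polar_sq_le (x y : A) : P.polar x y ^ 2 ≤ P.n x * P.n y := by
  have h := discrim_le_zero (a := P.n x) (b := 2 * P.polar x y) (c := P.n y) fun r => by
    have := P.n_nonneg (r • x + y)
    rw [n_add, n_smul, polar_smul_left] at this
    linear_combination this
  unfold discrim at h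
  linarith

theorem exists_perp [FiniteDimensional ℝ A] (B : Submodule ℝ A) (hB : B ≠ ⊤) :
    ∃ i : A, P.n i = 1 ∧ ∀ b ∈ B, P.polar i b = 0 := by
  let polarB : A →ₗ[ℝ] A →ₗ[ℝ] ℝ :=
    LinearMap.mk₂ ℝ P.polar P.polar_add_left P.polar_smul_left P.polar_add_right
      P.polar_smul_right
  let ψ : A →ₗ[ℝ] Module.Dual ℝ B := polarB.compl₂ B.subtype
  have hker : LinearMap.ker ψ ≠ ⊥ := fun hker => by
    have h1 := LinearMap.finrank_range_add_finrank_ker ψ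
    rw [hker, finrank_bot, add_zero] at h1
    have h2 := Submodule.finrank_le (LinearMap.range ψ)
    rw [Subspace.dual_finrank_eq] at h2
    have h3 := Submodule.finrank_lt hB
    omega
  obtain ⟨i, hi, hi0⟩ := (Submodule.ne_bot_iff _).mp hker
  have hperp (b : A) (hb : b ∈ B) : P.polar i b = 0 :=
    LinearMap.congr_fun (LinearMap.mem_ker.mp hi) ⟨b, hb⟩
  have hn := P.n_pos hi0
  refine ⟨(√(P.n i))⁻¹ • i, ?_, fun b hb => ?_⟩
  · rw [n_smul, inv_pow, Real.sq_sqrt hn.le, inv_mul_cancel₀ hn.ne']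
  · rw [polar_smul_left, hperp b hb, mul_zero]

omit [IsScalarTower ℝ A A] in
theorem mul_conj_eq (x y : A) : x * P.conj y = P.t y • x - x * y := by
  rw [conj, mul_sub, mul_smul_comm, P.mul_e]

omit [SMulCommClass ℝ A A] in
theorem conj_mul_eq (x y : A) : P.conj x * y = P.t x • y - x * y := by
  rw [conj, sub_mul, smul_mul_assoc, P.e_mul]

omit [IsScalarTower ℝ A A] in
theorem mul_conj (x : A) : x * P.conj x = P.n x • P.e := by
  rw [conj, mul_sub, mul_smul_comm, P.mul_e, P.mul_self]
  module

omit [IsScalarTower ℝ A A] in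
theorem two_polar_smul_e (x y : A) :
    (2 * P.polar x y) • P.e = x * P.conj y + y * P.conj x := by
  simp only [conj, mul_sub, mul_smul_comm, P.mul_e]
  linear_combination (norm := module) P.mul_add_mul_swap x y

theorem t_eq_zero_of_mul_self_eq {x : A} {c : ℝ} (hx : x * x = c • P.e) (hc : c ≤ 0) :
    P.t x = 0 := by
  by_contra ht
  have htx : P.t x • x = (c + P.n x) • P.e := by
    linear_combination (norm := module) hx - P.mul_self x
  have hxe : x = ((P.t x)⁻¹ * (c + P.n x)) • P.e := by
    rw [← smul_smul, ← htx, inv_smul_smul₀ ht]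
  have hd : ((P.t x)⁻¹ * (c + P.n x)) ^ 2 = c := by
    rw [hxe, smul_mul_assoc, mul_smul_comm, P.mul_e, smul_smul] at hx
    rw [sq]; exact P.smul_e_injective hx
  have hd0 : (P.t x)⁻¹ * (c + P.n x) = 0 := by nlinarith
  rw [hd0, zero_smul] at hxe
  exact ht (by rw [hxe, map_zero])

omit [IsScalarTower ℝ A A] in
theorem mul_perp_eq {B : Submodule ℝ A} (hBe : P.e ∈ B) {i : A}
    (hiB : ∀ b ∈ B, P.polar i b = 0) {b : A} (hb : b ∈ B) : b * i = i * P.conj b := by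
  have h := P.two_polar_smul_e b i
  rw [P.conj_eq_neg (P.t_eq_zero_of_polar_e (hiB _ hBe)), P.polar_comm, hiB b hb, mul_neg,
    mul_zero, zero_smul] at h
  linear_combination (norm := abel) h

omit [IsScalarTower ℝ A A] in
theorem toSpanSingleton_e_mul (r s : ℝ) :
    LinearMap.toSpanSingleton ℝ A P.e (r * s) =
      LinearMap.toSpanSingleton ℝ A P.e r * LinearMap.toSpanSingleton ℝ A P.e s := by
  simp only [LinearMap.toSpanSingleton_apply, mul_smul_comm, P.mul_e, smul_smul, mul_comm]

theorem complexEmb_mul {i : A} (hi : i * i = -P.e) (z w : ℂ) :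
    P.complexEmb i (z * w) = P.complexEmb i z * P.complexEmb i w := by
  simp only [complexEmb_apply, Complex.mul_re, Complex.mul_im, mul_add, add_mul, smul_mul_assoc,
    mul_smul_comm, P.e_mul, P.mul_e, hi, smul_neg]
  module

noncomputable def octonionEmb (φ : Quaternion ℝ →ₗ[ℝ] A) (l : A) : Octo →ₗ[ℝ] A :=
  φ ∘ₗ LinearMap.fst ℝ _ _ + LinearMap.mulRight ℝ l ∘ₗ φ ∘ₗ LinearMap.snd ℝ _ _

omit [SMulCommClass ℝ A A] in
theorem octonionEmb_apply (φ : Quaternion ℝ →ₗ[ℝ] A) (l : A) (x : Octo) :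
    octonionEmb φ l x = φ (Prod.fst x) + φ (Prod.snd x) * l := rfl

section Alternative

variable (halt : ∀ x y : A, x * (x * y) = x * x * y ∧ x * (y * y) = x * y * y)
include halt P

omit [SMulCommClass ℝ A A] in
theorem associator_mul_self_right (x y : A) : associator x y (x * y) = 0 := by
  have hsum : associator (x * y) x y + associator (y * x) x y = 0 := calc
    _ = associator (x * y + y * x) x y := by simp only [associator_apply, add_mul]; abel
    _ = P.t x • associator y x y + P.t y • associator x x y
        - (2 * P.polar x y) • associator P.e x y := by
      rw [P.mul_add_mul_swap]
      simp only [associator_apply, add_mul, sub_mul, smul_mul_assoc]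
      module
    _ = 0 := by
      rw [associator_self_mid halt, associator_self_left halt, associator_apply, P.e_mul,
        P.e_mul, sub_self]
      simp
  have h := associator_cocycle x y x y
  rw [associator_self_mid halt, associator_self_mid halt, mul_zero, zero_mul,
    associator_swap_left halt (y * x)] at h
  linear_combination (norm := abel) -h - hsum

omit [SMulCommClass ℝ A A] in
theorem mul_mul_mul_swap (x y : A) : x * y * (y * x) = x * (y * y) * x := by
  have h : associator (x * y) y x = 0 := by
    rw [associator_swap_left halt y, associator_swap_right halt, associator_swap_left halt,
      P.associator_mul_self_right halt, neg_zero, neg_zero, neg_zero]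
  rw [associator_apply, ← (halt x y).2, sub_eq_zero] at h
  exact h.symm

/-- For `s = -polar u v`, the element `u * v - s • e` squares to `(s² - n u * n v) • e`, a
nonpositive multiple of `e` by Cauchy–Schwarz, so its trace vanishes. -/
theorem t_mul_comm_of_t_eq_zero {u v : A} (hu : P.t u = 0) (hv : P.t v = 0) :
    P.t (u * v) = P.t (v * u) := by
  have hu2 : u * u = (-P.n u) • P.e := by rw [P.mul_self, hu]; module
  have hv2 : v * v = (-P.n v) • P.e := by rw [P.mul_self, hv]; module
  have hsw := P.mul_add_mul_swap u v
  rw [hu, hv, zero_smul, zero_smul, add_zero, zero_sub] at hsw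
  set s := -P.polar u v with hs
  have hvu : v * u = (2 * s) • P.e - u * v := by
    rw [hs]
    linear_combination (norm := module) hsw
  have huv2 : u * v * (u * v) = (2 * s) • (u * v) - (P.n u * P.n v) • P.e := by
    have h := P.mul_mul_mul_swap halt u v
    rw [hv2, mul_smul_comm, P.mul_e, smul_mul_assoc, hu2, hvu, mul_sub, mul_smul_comm,
      P.mul_e] at h
    linear_combination (norm := module) -h
  have hp : (u * v - s • P.e) * (u * v - s • P.e) = (s ^ 2 - P.n u * P.n v) • P.e := by
    simp only [sub_mul, mul_sub, smul_mul_assoc, mul_smul_comm, P.e_mul, P.mul_e, huv2]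
    module
  have htp := P.t_eq_zero_of_mul_self_eq hp (by nlinarith [P.polar_sq_le u v])
  have htuv : P.t (u * v) = 2 * s := by
    rw [map_sub, map_smul, P.t_e, smul_eq_mul, sub_eq_zero] at htp
    linarith
  rw [hvu, map_sub, map_smul, P.t_e, smul_eq_mul, htuv]
  ring

theorem t_mul_comm (x y : A) : P.t (x * y) = P.t (y * x) := by
  set u := x - (P.t x / 2) • P.e
  set v := y - (P.t y / 2) • P.e
  have htu : P.t u = 0 := by simp only [u, map_sub, map_smul, P.t_e, smul_eq_mul]; ring
  have htv : P.t v = 0 := by simp only [v, map_sub, map_smul, P.t_e, smul_eq_mul]; ring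
  have hcomm : x * y - y * x = u * v - v * u := by
    simp only [u, v, sub_mul, mul_sub, smul_mul_assoc, mul_smul_comm, P.e_mul, P.mul_e]
    module
  have h := congrArg P.t hcomm
  rwa [map_sub, map_sub, P.t_mul_comm_of_t_eq_zero halt htu htv, sub_self, sub_eq_zero] at h

theorem t_mul (x y : A) : P.t (x * y) = P.t x * P.t y - 2 * P.polar x y := by
  have h := congrArg P.t (P.mul_add_mul_swap x y)
  simp only [map_add, map_sub, map_smul, smul_eq_mul, P.t_e, P.t_mul_comm halt y x] at h
  linarith

theorem conj_mul_rev (x y : A) : P.conj (x * y) = P.conj y * P.conj x := by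
  simp only [conj, sub_mul, mul_sub, smul_mul_assoc, mul_smul_comm, P.e_mul, P.mul_e,
    P.t_mul halt]
  linear_combination (norm := module) -P.mul_add_mul_swap x y

omit [IsScalarTower ℝ A A] in
theorem mul_mul_conj (x y : A) : x * y * P.conj y = P.n y • x := by
  rw [conj, mul_sub, mul_smul_comm, P.mul_e, ← (halt x y).2, P.mul_self y, mul_sub,
    mul_smul_comm, mul_smul_comm, P.mul_e]
  module

theorem mul_mul_conj_mul (x y : A) : x * y * (P.conj y * x) = P.n y • (x * x) := by
  have h : P.t y • y - y * y = P.n y • P.e := by rw [P.mul_self]; module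
  rw [conj, sub_mul, smul_mul_assoc, P.e_mul, mul_sub, mul_smul_comm, P.mul_mul_mul_swap halt,
    ← smul_mul_assoc, ← mul_smul_comm, ← sub_mul, ← mul_sub, h, mul_smul_comm, P.mul_e,
    smul_mul_assoc]

theorem n_mul (x y : A) : P.n (x * y) = P.n x * P.n y := by
  have h := P.mul_conj (x * y)
  rw [P.conj_mul_rev halt, P.mul_conj_eq _ x, mul_sub, mul_smul_comm, P.mul_mul_conj halt,
    P.mul_mul_conj_mul halt, P.mul_self x] at h
  exact P.smul_e_injective (by linear_combination (norm := module) -h)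

theorem polar_mul_mul_right (x z y : A) : P.polar (x * y) (z * y) = P.polar x z * P.n y := by
  have h := P.n_mul halt (x + z) y
  rw [add_mul, n_add, n_add, P.n_mul halt x y, P.n_mul halt z y] at h
  linear_combination h / 2

theorem polar_mul_mul_add_polar_mul_mul (x y z w : A) :
    P.polar (x * y) (z * w) + P.polar (x * w) (z * y) = 2 * P.polar x z * P.polar y w := by
  have h := P.polar_mul_mul_right halt x z (y + w)
  rw [mul_add, mul_add, polar_add_left, polar_add_right, polar_add_right, n_add,
    P.polar_mul_mul_right halt x z y, P.polar_mul_mul_right halt x z w] at h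
  linear_combination h

theorem polar_mul_left (x y z : A) : P.polar (x * y) z = P.polar (P.conj x * z) y := by
  have h := P.polar_mul_mul_add_polar_mul_mul halt x y P.e z
  rw [P.e_mul, P.e_mul] at h
  rw [conj_mul_eq, polar_sub_left, polar_smul_left, P.polar_comm z y]
  linear_combination h + P.polar y z * P.two_polar_e x

theorem polar_mul_right (x y z : A) : P.polar (x * y) z = P.polar (z * P.conj y) x := by
  have h := P.polar_mul_mul_add_polar_mul_mul halt x y z P.e
  rw [P.mul_e, P.mul_e] at h
  rw [mul_conj_eq, polar_sub_left, polar_smul_left, P.polar_comm (z * y) x, P.polar_comm z x]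
  linear_combination h + P.polar x z * P.two_polar_e y

theorem two_polar_conj (x y : A) : 2 * P.polar y (P.conj x) = P.t (y * x) := by
  have h := P.two_polar_smul_e y (P.conj x)
  rw [P.conj_conj, ← P.conj_mul_rev halt, add_conj] at h
  exact P.smul_e_injective h

section Doubling

variable {B : Submodule ℝ A} (hBe : P.e ∈ B) (hBmul : ∀ a ∈ B, ∀ b ∈ B, a * b ∈ B)
  {i : A} (hiB : ∀ b ∈ B, P.polar i b = 0)
include hBe hiB

include hBmul in
theorem polar_mul_perp {a b : A} (ha : a ∈ B) (hb : b ∈ B) : P.polar (b * i) a = 0 := by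
  rw [P.polar_mul_left halt, P.polar_comm]
  exact hiB _ (hBmul _ (P.conj_mem hBe hb) _ ha)

include hBmul in
theorem conj_mul_perp {b : A} (hb : b ∈ B) : P.conj (b * i) = -(b * i) :=
  P.conj_eq_neg (P.t_eq_zero_of_polar_e (P.polar_mul_perp halt hBe hBmul hiB hBe hb))

include hBmul in
theorem mul_mul_perp {a b : A} (ha : a ∈ B) (hb : b ∈ B) : a * (b * i) = b * a * i := by
  have hti := P.t_eq_zero_of_polar_e (hiB _ hBe)
  refine P.eq_of_polar_eq fun z => ?_
  have e1 : P.polar (a * (b * i)) z = P.polar (b * i) (P.conj a * z) := by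
    rw [P.polar_mul_left halt, P.polar_comm]
  have hcai : P.conj a * i = i * a := by
    rw [P.mul_perp_eq hBe hiB (P.conj_mem hBe ha), P.conj_conj]
  have e2 := P.polar_mul_mul_add_polar_mul_mul halt b i (P.conj a) z
  rw [hcai] at e2
  have e3 := P.polar_mul_mul_add_polar_mul_mul halt b z i a
  rw [P.polar_comm b i, hiB b hb, mul_zero, zero_mul] at e3
  have e4 : P.polar (b * a * i) z = -P.polar (z * i) (b * a) := by
    rw [P.polar_mul_right halt, P.conj_eq_neg hti, mul_neg, polar_neg_left]
  have hzi : z * i = P.t z • i - (2 * P.polar i z) • P.e - i * z := by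
    have h := P.mul_add_mul_swap i z
    rw [hti, zero_smul, zero_add] at h
    linear_combination (norm := module) h
  have e5 : P.polar (z * i) (b * a) = P.t z * P.polar i (b * a)
      - 2 * P.polar i z * P.polar P.e (b * a) - P.polar (i * z) (b * a) := by
    rw [hzi, polar_sub_left, polar_sub_left, polar_smul_left, polar_smul_left]
  have hiba : P.polar i (b * a) = 0 := hiB _ (hBmul b hb a ha)
  have heba : 2 * P.polar P.e (b * a) = P.t (b * a) := by rw [polar_comm, two_polar_e]
  linear_combination e1 + e2 - e3 - e4 + e5 + P.polar_comm (b * a) (i * z)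
    + P.t z * hiba - P.polar i z * heba + P.polar i z * P.two_polar_conj halt a b

theorem perp_mul_mul (a : A) {b : A} (hb : b ∈ B) : a * i * b = a * P.conj b * i := by
  have hti := P.t_eq_zero_of_polar_e (hiB _ hBe)
  refine P.eq_of_polar_eq fun z => ?_
  have f1 : P.polar (a * i * b) z = P.polar (a * i) (z * P.conj b) := by
    rw [P.polar_mul_right halt, P.polar_comm]
  have f2 := P.polar_mul_mul_add_polar_mul_mul halt a i z (P.conj b)
  rw [hiB _ (P.conj_mem hBe hb), mul_zero] at f2
  have f3 : P.polar (a * P.conj b * i) z = -P.polar (z * i) (a * P.conj b) := by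
    rw [P.polar_mul_right halt, P.conj_eq_neg hti, mul_neg, polar_neg_left]
  linear_combination f1 + f2 - f3 - P.polar_comm (a * P.conj b) (z * i)

variable (hni : P.n i = 1)
include hni

include hBmul in
theorem perp_mul_perp {a b : A} (ha : a ∈ B) (hb : b ∈ B) :
    a * i * (b * i) = -(P.conj b * a) := by
  refine P.eq_of_polar_eq fun z => ?_
  have g1 : P.polar (a * i * (b * i)) z = -P.polar (a * i) (z * (b * i)) := by
    rw [P.polar_mul_right halt, P.conj_mul_perp halt hBe hBmul hiB hb, mul_neg, polar_neg_left,
      polar_comm]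
  have g2 := P.polar_mul_mul_add_polar_mul_mul halt a i z (b * i)
  have g3 : 2 * P.polar i (b * i) = P.t b := by
    have h := P.polar_mul_mul_right halt P.e b i
    rw [P.e_mul, hni, mul_one] at h
    rw [h, polar_comm, two_polar_e]
  have g4 : P.polar (a * (b * i)) (z * i) = P.polar (b * a) z := by
    rw [P.mul_mul_perp halt hBe hBmul hiB ha hb, P.polar_mul_mul_right halt, hni, mul_one]
  rw [g4] at g2
  rw [g1, polar_neg_left, conj_mul_eq, polar_sub_left, polar_smul_left]
  linear_combination -g2 - P.polar a z * g3

include hBmul in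
theorem mul_assoc_of_perp {a b c : A} (ha : a ∈ B) (hb : b ∈ B) (hc : c ∈ B) :
    c * (a * b) = c * a * b := by
  have hD2 {x y : A} (hx : x ∈ B) (hy : y ∈ B) := P.mul_mul_perp halt hBe hBmul hiB hx hy
  have hD3 (x : A) {y : A} (hy : y ∈ B) := P.perp_mul_mul halt hBe hiB x hy
  have E1 : associator a b (c * i) = (c * (a * b) - c * b * a) * i := by
    rw [associator_apply, hD2 (hBmul a ha b hb) hc, hD2 hb hc, hD2 ha (hBmul c hc b hb), sub_mul]
  have E2 : associator a (c * i) b = (c * a * P.conj b - c * P.conj b * a) * i := by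
    rw [associator_apply, hD2 ha hc, hD3 (c * a) hb, hD3 c hb,
      hD2 ha (hBmul c hc _ (P.conj_mem hBe hb)), sub_mul]
  have hX : (c * (a * b) - c * a * b) * i = 0 := by
    have h := associator_swap_right halt a b (c * i)
    rw [E1, E2, P.mul_conj_eq, P.mul_conj_eq] at h
    simp only [sub_mul, smul_mul_assoc] at h ⊢
    linear_combination (norm := module) h
  have hn := congrArg P.n hX
  rw [P.n_mul halt, hni, mul_one, P.n_zero, n_eq_zero_iff, sub_eq_zero] at hn
  exact hn

end Doubling

section QuaternionUnits

variable {i j : A} (hti : P.t i = 0) (htj : P.t j = 0) (hij : P.polar i j = 0)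
include hti hij

theorem t_mul_eq_zero : P.t (i * j) = 0 := by
  rw [P.t_mul halt, hti, hij]
  ring

include htj

theorem quaternionEmb_mul (hni : P.n i = 1) (hnj : P.n j = 1) (p q : Quaternion ℝ) :
    P.quaternionEmb i j (p * q) = P.quaternionEmb i j p * P.quaternionEmb i j q := by
  have hii := P.mul_self_eq_neg_e hti hni
  have hjj := P.mul_self_eq_neg_e htj hnj
  have hji := P.mul_anticomm hti htj hij
  have hkk := P.mul_self_eq_neg_e (P.t_mul_eq_zero halt hti hij)
    (by rw [P.n_mul halt, hni, hnj, one_mul])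
  have hik : i * (i * j) = -j := by rw [(halt i j).1, hii, neg_mul, P.e_mul]
  have hkj : i * j * j = -i := by rw [← (halt i j).2, hjj, mul_neg, P.mul_e]
  have hki : i * j * i = j := by
    rw [show i * j = -(j * i) by rw [hji, neg_neg], neg_mul, ← (halt j i).2, hii, mul_neg,
      P.mul_e, neg_neg]
  have hjk : j * (i * j) = i := by
    rw [show i * j = -(j * i) by rw [hji, neg_neg], mul_neg, (halt j i).1, hjj, neg_mul,
      P.e_mul, neg_neg]
  simp only [quaternionEmb_apply, Quaternion.re_mul, Quaternion.imI_mul, Quaternion.imJ_mul,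
    Quaternion.imK_mul, mul_add, add_mul, smul_mul_assoc, mul_smul_comm, P.e_mul, P.mul_e, hii,
    hjj, hkk, hji, hik, hkj, hki, hjk, smul_neg]
  match_scalars <;> ring

theorem quaternionEmb_star (q : Quaternion ℝ) :
    P.quaternionEmb i j (star q) = P.conj (P.quaternionEmb i j q) := by
  simp only [conj, quaternionEmb_apply, map_add, map_smul, P.t_e, hti, htj,
    P.t_mul_eq_zero halt hti hij, Quaternion.re_star, Quaternion.imI_star,
    Quaternion.imJ_star, Quaternion.imK_star, smul_eq_mul]
  module

theorem mul_ne_mul_swap (hni : P.n i = 1) (hnj : P.n j = 1) : i * j ≠ j * i := by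
  rw [P.mul_anticomm hti htj hij]
  intro h
  have h2 : (2 : ℝ) • (i * j) = 0 := by
    rw [two_smul]
    nth_rw 2 [h]
    exact add_neg_cancel _
  have hk := P.n_mul halt i j
  rw [show i * j = 0 by simpa using h2, P.n_zero, hni, hnj, one_mul] at hk
  exact zero_ne_one hk

end QuaternionUnits

section OctonionDoubling

variable {φ : Quaternion ℝ →ₗ[ℝ] A} (hmul : ∀ p q, φ (p * q) = φ p * φ q)
  (h1 : φ 1 = P.e) {l : A} (hl : ∀ b ∈ LinearMap.range φ, P.polar l b = 0)
include hmul h1 hl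

theorem octonionEmb_mul (hstar : ∀ q, φ (star q) = P.conj (φ q)) (hnl : P.n l = 1)
    (x y : Octo) : octonionEmb φ l (x * y) = octonionEmb φ l x * octonionEmb φ l y := by
  have hBmul := φ.mul_mem_range_of_map_mul hmul
  have he : P.e ∈ LinearMap.range φ := ⟨1, h1⟩
  have hfst : Prod.fst (x * y) = Prod.fst x * Prod.fst y - star (Prod.snd y) * Prod.snd x := rfl
  have hsnd : Prod.snd (x * y) = Prod.snd y * Prod.fst x + Prod.snd x * star (Prod.fst y) := rfl
  have e1 := P.mul_mul_perp halt he hBmul hl (LinearMap.mem_range_self φ (Prod.fst x))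
    (LinearMap.mem_range_self φ (Prod.snd y))
  have e2 := P.perp_mul_mul halt he hl (φ (Prod.snd x)) (LinearMap.mem_range_self φ (Prod.fst y))
  have e3 := P.perp_mul_perp halt he hBmul hl hnl (LinearMap.mem_range_self φ (Prod.snd x))
    (LinearMap.mem_range_self φ (Prod.snd y))
  rw [octonionEmb_apply, octonionEmb_apply, octonionEmb_apply, hfst, hsnd, map_sub, map_add,
    hmul, hmul, hmul, hmul, hstar, hstar]
  simp only [mul_add, add_mul, e1, e2, e3]
  abel

theorem octonionEmb_injective (hinj : Function.Injective φ) (hnl : P.n l = 1) :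
    Function.Injective (octonionEmb φ l) := by
  refine (injective_iff_map_eq_zero _).2 fun x hx => ?_
  rw [octonionEmb_apply] at hx
  have hperp := P.polar_mul_perp halt (h1 ▸ φ.mem_range_self 1)
    (φ.mul_mem_range_of_map_mul hmul) hl
    (LinearMap.mem_range_self φ (Prod.fst x)) (LinearMap.mem_range_self φ (Prod.snd x))
  have hx1 : φ (Prod.fst x) = 0 := by
    have h := congrArg (fun w => P.polar w (φ (Prod.fst x))) hx
    simp only [polar_add_left, hperp, add_zero, polar_self] at h
    rwa [← zero_smul ℝ (0 : A), polar_smul_left, zero_mul, n_eq_zero_iff] at h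
  rw [hx1, zero_add] at hx
  have hx2 : φ (Prod.snd x) = 0 := by
    rw [← P.n_eq_zero_iff, ← mul_one (P.n _), ← hnl, ← P.n_mul halt, hx, P.n_zero]
  exact Prod.ext (hinj (hx1.trans φ.map_zero.symm)) (hinj (hx2.trans φ.map_zero.symm))

/-- A unit vector orthogonal to the range would make it associative (`mul_assoc_of_perp`), while
`a * (b * l) = b * a * l` there. -/
theorem range_octonionEmb_eq_top [FiniteDimensional ℝ A]
    (hstar : ∀ q, φ (star q) = P.conj (φ q))
    (hnl : P.n l = 1) {a b : A} (ha : a ∈ LinearMap.range φ) (hb : b ∈ LinearMap.range φ)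
    (hab : a * b ≠ b * a) : LinearMap.range (octonionEmb φ l) = ⊤ := by
  by_contra htop
  obtain ⟨m, hnm, hm⟩ := P.exists_perp _ htop
  have hmem {p : Quaternion ℝ} : φ p ∈ LinearMap.range (octonionEmb φ l) :=
    ⟨(show Octo from (p, 0)), (octonionEmb_apply φ l _).trans (by simp)⟩
  have hlmem : l ∈ LinearMap.range (octonionEmb φ l) :=
    ⟨(show Octo from (0, 1)), (octonionEmb_apply φ l _).trans (by simp [h1, P.e_mul])⟩
  obtain ⟨p, rfl⟩ := ha
  obtain ⟨q, rfl⟩ := hb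
  have hassoc := P.mul_assoc_of_perp halt (h1 ▸ hmem)
    ((octonionEmb φ l).mul_mem_range_of_map_mul (P.octonionEmb_mul halt hmul h1 hl hstar hnl))
    hm hnm (hmem (p := q)) hlmem (hmem (p := p))
  rw [P.mul_mul_perp halt (h1 ▸ φ.mem_range_self 1) (φ.mul_mem_range_of_map_mul hmul) hl
    (LinearMap.mem_range_self φ p) (LinearMap.mem_range_self φ q)] at hassoc
  have hz : (φ p * φ q - φ q * φ p) * l = 0 := by rw [sub_mul, hassoc, sub_self]
  apply hab
  rw [← sub_eq_zero, ← P.n_eq_zero_iff, ← mul_one (P.n _), ← hnl, ← P.n_mul halt, hz,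
    P.n_zero]

end OctonionDoubling

end Alternative

end QuadraticStructure

open QuadraticStructure in
/-- Every alternative real division algebra is isomorphic (as an ℝ-algebra,
i.e. by a multiplication-preserving linear equivalence) to ℝ, ℂ, the
quaternions ℍ, or the octonions 𝕆. -/
theorem stmt_1 {A : Type*} [NonUnitalNonAssocRing A] [Module ℝ A]
    [SMulCommClass ℝ A A] [IsScalarTower ℝ A A] [FiniteDimensional ℝ A]
    [Nontrivial A]
    (hdiv : ∀ x y : A, x * y = 0 → x = 0 ∨ y = 0)
    (halt : ∀ x y : A, x * (x * y) = (x * x) * y ∧ x * (y * y) = (x * y) * y) :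
    (∃ e : A ≃ₗ[ℝ] ℝ, ∀ x y : A, e (x * y) = e x * e y) ∨
    (∃ e : A ≃ₗ[ℝ] ℂ, ∀ x y : A, e (x * y) = e x * e y) ∨
    (∃ e : A ≃ₗ[ℝ] Quaternion ℝ, ∀ x y : A, e (x * y) = e x * e y) ∨
    (∃ e : A ≃ₗ[ℝ] Octo, ∀ x y : A, e (x * y) = e x * e y) := by
  obtain ⟨P⟩ := nonempty_quadraticStructure hdiv halt
  have hR := P.toSpanSingleton_e_mul
  have hRinj := LinearMap.injective_of_map_mul _ hR (by simpa using P.e_ne_zero)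
  by_cases hRtop : LinearMap.range (LinearMap.toSpanSingleton ℝ A P.e) = ⊤
  · exact Or.inl (exists_linearEquiv_map_mul_of_range_eq_top _ hRinj hRtop hR)
  obtain ⟨i, hni, hi⟩ := P.exists_perp _ hRtop
  have hti : P.t i = 0 := P.t_eq_zero_of_polar_e (hi _ ⟨1, one_smul ℝ P.e⟩)
  have hC := P.complexEmb_mul (P.mul_self_eq_neg_e hti hni)
  have hCinj := LinearMap.injective_of_map_mul _ hC (P.complexEmb_one i ▸ P.e_ne_zero)
  by_cases hCtop : LinearMap.range (P.complexEmb i) = ⊤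
  · exact Or.inr (Or.inl (exists_linearEquiv_map_mul_of_range_eq_top _ hCinj hCtop hC))
  obtain ⟨j, hnj, hj⟩ := P.exists_perp _ hCtop
  have htj : P.t j = 0 := P.t_eq_zero_of_polar_e (hj _ ⟨1, P.complexEmb_one i⟩)
  have hij : P.polar i j = 0 := by rw [polar_comm]; exact hj _ ⟨Complex.I, P.complexEmb_I i⟩
  have hH := P.quaternionEmb_mul halt hti htj hij hni hnj
  have hH1 := P.quaternionEmb_one i j
  have hHinj := LinearMap.injective_of_map_mul _ hH (hH1 ▸ P.e_ne_zero)
  by_cases hHtop : LinearMap.range (P.quaternionEmb i j) = ⊤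
  · exact Or.inr (Or.inr (Or.inl (exists_linearEquiv_map_mul_of_range_eq_top _ hHinj hHtop hH)))
  obtain ⟨l, hnl, hl⟩ := P.exists_perp _ hHtop
  have hstar := P.quaternionEmb_star halt hti htj hij
  refine Or.inr (Or.inr (Or.inr (exists_linearEquiv_map_mul_of_range_eq_top _
    (P.octonionEmb_injective halt hH hH1 hl hHinj hnl) ?_
    (P.octonionEmb_mul halt hH hH1 hl hstar hnl))))
  exact P.range_octonionEmb_eq_top halt hH hH1 hl hstar hnl (P.left_mem_range_quaternionEmb i j)
    (P.right_mem_range_quaternionEmb i j) (P.mul_ne_mul_swap halt hti htj hij hni hnj)
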